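/- Let (A(t))_{t∈ℕ} be a sequence of n×n nonnegative real matrices, each having a positive diagonal. Then there exists a strictly increasing sequence of natural numbers 0 < t_0 < t_1 < t_2 < ... such that for every i ∈ ℕ the forward accumulation A(t_i, t_{i+1}) := A(t_i)·A(t_i+1)···A(t_{i+1}-1) has the same zero pattern as the forward accumulation A(t_0, t_1); that is, for all indices a, b: (A(t_i, t_{i+1}))_{ab} > 0 if and only if (A(t_0, t_1))_{ab} > 0. -/

import Mathlib

open Matrix

/-- Forward accumulation `A(s,t) = A(s) * A(s+1) * ⋯ * A(t-1)`
(with `fwdAcc A s s` the identity matrix). -/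
def fwdAcc {n : ℕ} (A : ℕ → Matrix (Fin n) (Fin n) ℝ) (s t : ℕ) :
    Matrix (Fin n) (Fin n) ℝ :=
  ((List.range' s (t - s)).map A).prod

/-!
Write `P(s, t)` for the set of positive entries of `A(s, t)`. Since all the matrices involved
are nonnegative with positive diagonal, multiplying by a further factor on either side can only
create positive entries, so `P(s, t)` grows with `t` and shrinks as `s` increases. Patterns live
in the finite lattice `Set (Fin n × Fin n)`, so for each `s` the pattern `P(s, t)` is eventually
constant in `t`, with limit `L(s)`; the limits `L(s)` decrease, hence are eventually equal to
some `c`. Any chain `t₀ < t₁ < ⋯` started late enough, in which each `tᵢ₊₁` is past the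
stabilization time of `P(tᵢ, ·)`, then has `P(tᵢ, tᵢ₊₁) = c` for all `i`.
-/

open Filter

section Chains

variable {α : Type*} [PartialOrder α]

theorem MonotoneOn.exists_eventually_eq_of_Ici [WellFoundedGT α] {f : ℕ → α} {a : ℕ}
    (hf : MonotoneOn f (Set.Ici a)) : ∃ c, ∀ᶠ t in atTop, f t = c := by
  obtain ⟨n, hn⟩ := WellFoundedGT.monotone_chain_condition
    ⟨fun k => f (a + k), fun k k' hk => hf (by simp) (by simp) (by omega)⟩
  refine ⟨f (a + n), eventually_atTop.2 ⟨a + n, fun t ht => ?_⟩⟩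
  obtain ⟨m, rfl⟩ := Nat.exists_eq_add_of_le (le_trans (Nat.le_add_right a n) ht)
  exact (hn m (by omega)).symm

theorem exists_eventually_eventually_eq [WellFoundedGT α] [WellFoundedLT α]
    (P : ℕ → ℕ → α)
    (hmono : ∀ s, MonotoneOn (P s) (Set.Ici s)) (hanti : ∀ t, AntitoneOn (P · t) (Set.Iic t)) :
    ∃ c, ∀ᶠ s in atTop, ∀ᶠ t in atTop, P s t = c := by
  choose L hL using fun s => (hmono s).exists_eventually_eq_of_Ici
  have hL_anti : Antitone L := fun s s' hss' => by
    obtain ⟨t, hst, hs't, hs'_le⟩ :=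
      ((hL s).and ((hL s').and (eventually_ge_atTop s'))).exists
    rw [← hst, ← hs't]
    exact hanti t (hss'.trans hs'_le) hs'_le hss'
  obtain ⟨s₀, hs₀⟩ := WellFoundedLT.antitone_chain_condition hL_anti
  refine ⟨L s₀, eventually_atTop.2 ⟨s₀, fun s hs => ?_⟩⟩
  exact (hL s).mono fun t ht => ht.trans (hs₀ s hs).symm

theorem exists_strictMono_chain_of_eventually_eventually {Q : ℕ → ℕ → Prop}
    (h : ∀ᶠ s in atTop, ∀ᶠ t in atTop, Q s t) (N : ℕ) :
    ∃ τ : ℕ → ℕ, N ≤ τ 0 ∧ StrictMono τ ∧ ∀ i, Q (τ i) (τ (i + 1)) := by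
  obtain ⟨M, hM⟩ := eventually_atTop.1 h
  have hnext : ∀ s, ∃ t, s < t ∧ (max N M ≤ s → Q s t) := fun s => by
    by_cases hs : max N M ≤ s
    · obtain ⟨t, hQ, hst⟩ :=
        ((hM s (le_of_max_le_right hs)).and (eventually_gt_atTop s)).exists
      exact ⟨t, hst, fun _ => hQ⟩
    · exact ⟨s + 1, s.lt_succ_self, fun h => absurd h hs⟩
  choose next hlt hQ using hnext
  have hτ_succ (i : ℕ) : next^[i + 1] (max N M) = next (next^[i] (max N M)) :=
    Function.iterate_succ_apply' ..
  have hτ : StrictMono fun i => next^[i] (max N M) :=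
    strictMono_nat_of_lt_succ fun i => (hτ_succ i).symm ▸ hlt _
  refine ⟨fun i => next^[i] (max N M), le_max_left _ _, hτ, fun i => ?_⟩
  simp only [hτ_succ]
  exact hQ _ (hτ.monotone (Nat.zero_le i))

end Chains

section Pattern

variable {ι R : Type*} [Fintype ι] [Semiring R] [PartialOrder R]
  [IsStrictOrderedRing R]

theorem mul_apply_pos_of_nonneg {M N : Matrix ι ι R} (hM : ∀ i j, 0 ≤ M i j)
    (hN : ∀ i j, 0 ≤ N i j) {a k b : ι} (hak : 0 < M a k) (hkb : 0 < N k b) :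
    0 < (M * N) a b :=
  Finset.sum_pos' (fun i _ => mul_nonneg (hM a i) (hN i b))
    ⟨k, Finset.mem_univ k, mul_pos hak hkb⟩

/-- For a nonnegative matrix, the complement of its zero pattern. -/
def posPattern (M : Matrix ι ι R) : Set (ι × ι) := {p | 0 < M p.1 p.2}

variable [DecidableEq ι]

variable (ι R) in
def nonnegPosDiag : Submonoid (Matrix ι ι R) where
  carrier := {M | (∀ i j, 0 ≤ M i j) ∧ ∀ i, 0 < M i i}
  one_mem' := ⟨fun i j => by by_cases h : i = j <;> simp [one_apply, h], fun i => by simp⟩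
  mul_mem' {M N} hM hN :=
    ⟨fun i j => Finset.sum_nonneg fun k _ => mul_nonneg (hM.1 i k) (hN.1 k j),
      fun i => mul_apply_pos_of_nonneg hM.1 hN.1 (hM.2 i) (hN.2 i)⟩

variable {M N : Matrix ι ι R}

theorem posPattern_subset_mul_right (hM : M ∈ nonnegPosDiag ι R)
    (hN : N ∈ nonnegPosDiag ι R) : posPattern M ⊆ posPattern (M * N) :=
  fun p hp => mul_apply_pos_of_nonneg hM.1 hN.1 hp (hN.2 p.2)

theorem posPattern_subset_mul_left (hM : M ∈ nonnegPosDiag ι R)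
    (hN : N ∈ nonnegPosDiag ι R) : posPattern N ⊆ posPattern (M * N) :=
  fun p hp => mul_apply_pos_of_nonneg hM.1 hN.1 (hM.2 p.1) hp

end Pattern

section FwdAcc

variable {n : ℕ} (A : ℕ → Matrix (Fin n) (Fin n) ℝ)

theorem fwdAcc_mul {s u t : ℕ} (hsu : s ≤ u) (hut : u ≤ t) :
    fwdAcc A s t = fwdAcc A s u * fwdAcc A u t := by
  have hsplit := List.range'_append (s := s) (m := u - s) (n := t - u) (step := 1)
  rw [one_mul, Nat.add_sub_cancel' hsu, show u - s + (t - u) = t - s by omega] at hsplit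
  rw [fwdAcc, fwdAcc, fwdAcc, ← List.prod_append, ← List.map_append, hsplit]

variable {A} (hA : ∀ t, A t ∈ nonnegPosDiag (Fin n) ℝ)
include hA

theorem fwdAcc_mem_nonnegPosDiag (s t : ℕ) : fwdAcc A s t ∈ nonnegPosDiag (Fin n) ℝ :=
  Submonoid.list_prod_mem _ fun _ hM => by
    obtain ⟨t, -, rfl⟩ := List.mem_map.1 hM
    exact hA t

theorem posPattern_fwdAcc_monotoneOn (s : ℕ) :
    MonotoneOn (fun t => posPattern (fwdAcc A s t)) (Set.Ici s) := fun t hst t' _ htt' => by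
  simpa only [fwdAcc_mul A hst htt'] using posPattern_subset_mul_right
    (fwdAcc_mem_nonnegPosDiag hA s t) (fwdAcc_mem_nonnegPosDiag hA t t')

theorem posPattern_fwdAcc_antitoneOn (t : ℕ) :
    AntitoneOn (fun s => posPattern (fwdAcc A s t)) (Set.Iic t) := fun s hst s' hs't hss' => by
  simpa only [fwdAcc_mul A hss' hs't] using posPattern_subset_mul_left
    (fwdAcc_mem_nonnegPosDiag hA s s') (fwdAcc_mem_nonnegPosDiag hA s' t)

end FwdAcc

/-- For a sequence of nonnegative matrices with positive diagonals there is a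
strictly increasing sequence of times `0 < t 0 < t 1 < ⋯` such that all the
forward accumulations `A(t i, t (i+1))` have the same zero pattern. -/
theorem statement2 {n : ℕ} (A : ℕ → Matrix (Fin n) (Fin n) ℝ)
    (hnonneg : ∀ t i j, 0 ≤ A t i j)
    (hdiag : ∀ t i, 0 < A t i i) :
    ∃ t : ℕ → ℕ, 0 < t 0 ∧ StrictMono t ∧
      ∀ i : ℕ, ∀ a b : Fin n,
        0 < fwdAcc A (t i) (t (i + 1)) a b ↔ 0 < fwdAcc A (t 0) (t 1) a b := by
  have hA : ∀ t, A t ∈ nonnegPosDiag (Fin n) ℝ := fun t => ⟨hnonneg t, hdiag t⟩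
  obtain ⟨c, hc⟩ := exists_eventually_eventually_eq (fun s t => posPattern (fwdAcc A s t))
    (posPattern_fwdAcc_monotoneOn hA) (posPattern_fwdAcc_antitoneOn hA)
  obtain ⟨τ, hτ0, hτ, hτc⟩ := exists_strictMono_chain_of_eventually_eventually hc 1
  refine ⟨τ, hτ0, hτ, fun i a b => ?_⟩
  exact Set.ext_iff.1 ((hτc i).trans (hτc 0).symm) (a, b)
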